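/- arXiv:1809.08000 — 4 statements merged into one kernel-verified Lean document; each statement's English description precedes it below -/
import Mathlib

section
/- Fix an integer p ≥ 2 and 0 ≤ α ≤ p−1. Then the p-adic upper entropy function and p-adic lower entropy function satisfy h̄(p−1−α) = h̲(α). -/
open Filter MeasureTheory Set
open scoped ENNReal

noncomputable section

/-- Number of words of length `n` over the alphabet `{0, …, p-1}` whose digit sum lies
strictly between `n(α-δ)` and `n(α+δ)`; this is `h(α,n,δ)`. -/
def hcount (p n : ℕ) (α δ : ℝ) : ℕ :=
  Nat.card {w : Fin n → Fin p //
    (n : ℝ) * (α - δ) < ∑ i, ((w i : ℕ) : ℝ) ∧ (∑ i, ((w i : ℕ) : ℝ)) < n * (α + δ)}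

/-- The `p`-adic entropy function
`h(α) = lim_{δ→0} limsup_{n→∞} log h(α,n,δ) / (n log p)`.
Since the inner quantity is nondecreasing in `δ`, the limit as `δ → 0⁺` equals the
infimum over `δ > 0`. -/
def entropy (p : ℕ) (α : ℝ) : ℝ :=
  ⨅ δ : {δ : ℝ // 0 < δ},
    limsup (fun n : ℕ => Real.log (hcount p n α δ) / (n * Real.log p)) atTop

/-- Number of words of length `n` over `{0, …, p-1}` with digit sum `< n(α+δ)`;
this is `h̄(α,n,δ)`. -/
def hbarCount (p n : ℕ) (α δ : ℝ) : ℕ :=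
  Nat.card {w : Fin n → Fin p // (∑ i, ((w i : ℕ) : ℝ)) < n * (α + δ)}

/-- The `p`-adic upper entropy function
`h̄(α) = lim_{δ→0} limsup_{n→∞} log h̄(α,n,δ) / (n log p)`, the limit in `δ`
being the infimum over `δ > 0` by monotonicity in `δ`. -/
def upperEntropy (p : ℕ) (α : ℝ) : ℝ :=
  ⨅ δ : {δ : ℝ // 0 < δ},
    limsup (fun n : ℕ => Real.log (hbarCount p n α δ) / (n * Real.log p)) atTop

/-- Number of words of length `n` over `{0, …, p-1}` with digit sum `> n(α-δ)`;
this is `h̲(α,n,δ)`. -/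
def hlowCount (p n : ℕ) (α δ : ℝ) : ℕ :=
  Nat.card {w : Fin n → Fin p // (n : ℝ) * (α - δ) < ∑ i, ((w i : ℕ) : ℝ)}

/-- The `p`-adic lower entropy function
`h̲(α) = lim_{δ→0} liminf_{n→∞} log h̲(α,n,δ) / (n log p)`, the limit in `δ`
being the infimum over `δ > 0` by monotonicity in `δ`. -/
def lowerEntropy (p : ℕ) (α : ℝ) : ℝ :=
  ⨅ δ : {δ : ℝ // 0 < δ},
    liminf (fun n : ℕ => Real.log (hlowCount p n α δ) / (n * Real.log p)) atTop

/-- The `(n+1)`-th digit `x_{n+1} ∈ {0,…,p-1}` of the non-terminating `p`-adic expansion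
`x = 0.x₁x₂x₃…` of `x ∈ [0,1]` (the expansion not ending in all zeros). -/
def padicDigit (p : ℕ) (x : ℝ) (n : ℕ) : ℤ :=
  (⌈x * p ^ (n + 1)⌉ - 1) - p * (⌈x * p ^ n⌉ - 1)

/-- `S_n(T^m x) = x_{m+1} + ⋯ + x_{m+n}`, the digit sum of length `n` after shifting
`m` times. In particular `msum p x 0 n = S_n(x)`. -/
def msum (p : ℕ) (x : ℝ) (m n : ℕ) : ℤ :=
  ∑ i ∈ Finset.range n, padicDigit p x (m + i)

/-- The `n`-th lower moving digit mean `M̲ₙ(x) = liminf_{m→∞} S_n(T^m x)/n`. -/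
def lowerMn (p : ℕ) (x : ℝ) (n : ℕ) : ℝ :=
  liminf (fun m : ℕ => (msum p x m n : ℝ) / n) atTop

/-- The `n`-th upper moving digit mean `M̄ₙ(x) = limsup_{m→∞} S_n(T^m x)/n`. -/
def upperMn (p : ℕ) (x : ℝ) (n : ℕ) : ℝ :=
  limsup (fun m : ℕ => (msum p x m n : ℝ) / n) atTop

/-- The lower moving digit mean `M̲(x) = lim_{n→∞} M̲ₙ(x)`; the limit exists by
subadditivity, hence equals the `liminf`. -/
def lowerM (p : ℕ) (x : ℝ) : ℝ := liminf (fun n : ℕ => lowerMn p x n) atTop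

/-- The upper moving digit mean `M̄(x) = lim_{n→∞} M̄ₙ(x)`; the limit exists by
subadditivity, hence equals the `limsup`. -/
def upperM (p : ℕ) (x : ℝ) : ℝ := limsup (fun n : ℕ => upperMn p x n) atTop

/-- The lower digit mean `A̲(x) = liminf_{n→∞} S_n(x)/n`. -/
def lowerA (p : ℕ) (x : ℝ) : ℝ := liminf (fun n : ℕ => (msum p x 0 n : ℝ) / n) atTop

/-- The upper digit mean `Ā(x) = limsup_{n→∞} S_n(x)/n`. -/
def upperA (p : ℕ) (x : ℝ) : ℝ := limsup (fun n : ℕ => (msum p x 0 n : ℝ) / n) atTop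

/-- The Banach set `B(α,β) = {x ∈ [0,1] : M̲(x) = α, M̄(x) = β}`. -/
def BanachSet (p : ℕ) (α β : ℝ) : Set ℝ :=
  {x | x ∈ Icc (0 : ℝ) 1 ∧ lowerM p x = α ∧ upperM p x = β}

lemma sum_rev (p n : ℕ) (hp : 1 ≤ p) (w : Fin n → Fin p) :
    ∑ i, (((w i).rev : ℕ) : ℝ) = (n : ℝ) * ((p : ℝ) - 1) - ∑ i, ((w i : ℕ) : ℝ) := by
  have h : ∀ i, (((w i).rev : ℕ) : ℝ) = (p : ℝ) - 1 - ((w i : ℕ) : ℝ) := by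
    intro i
    rw [Fin.val_rev]
    have h1 : (w i : ℕ) + 1 ≤ p := (w i).is_lt
    rw [Nat.cast_sub h1]
    push_cast
    ring
  simp only [h, Finset.sum_sub_distrib, Finset.sum_const, Finset.card_univ, Fintype.card_fin,
    nsmul_eq_mul]
  ring

lemma hbar_eq_hlow (p n : ℕ) (hp : 1 ≤ p) (α δ : ℝ) :
    hbarCount p n ((p : ℝ) - 1 - α) δ = hlowCount p n α δ := by
  apply Nat.card_congr
  refine Equiv.subtypeEquiv (Equiv.piCongrRight fun _ => (Fin.revPerm : Equiv.Perm (Fin p))) ?_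
  intro w
  simp only [Equiv.piCongrRight_apply, Pi.map_apply, Fin.revPerm_apply]
  rw [sum_rev p n hp w]
  constructor <;> intro h <;> nlinarith [h]

lemma hlow_zero (p : ℕ) (α δ : ℝ) : hlowCount p 0 α δ = 0 := by
  rw [hlowCount, Nat.card_eq_zero]
  left
  constructor
  rintro ⟨w, hw⟩
  simp at hw

lemma hlow_pos (p n : ℕ) (hp : 1 ≤ p) (hn : 1 ≤ n) {α δ : ℝ} (h : α - δ < (p : ℝ) - 1) :
    1 ≤ hlowCount p n α δ := by
  rw [hlowCount]
  have : Nonempty {w : Fin n → Fin p // (n : ℝ) * (α - δ) < ∑ i, ((w i : ℕ) : ℝ)} := by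
    refine ⟨⟨fun _ => ⟨p - 1, by omega⟩, ?_⟩⟩
    have : ∑ i : Fin n, (((p - 1 : ℕ) : ℝ)) = (n : ℝ) * ((p : ℝ) - 1) := by
      rw [Finset.sum_const, Finset.card_univ, Fintype.card_fin, nsmul_eq_mul,
        Nat.cast_sub hp]
      push_cast; ring
    simp only [this]
    have hn' : (0 : ℝ) < n := by exact_mod_cast hn
    exact mul_lt_mul_of_pos_left h hn'
  exact Nat.one_le_iff_ne_zero.mpr (Nat.card_ne_zero.mpr ⟨this, inferInstance⟩)

lemma hlow_le (p n : ℕ) (α δ : ℝ) : hlowCount p n α δ ≤ p ^ n := by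
  rw [hlowCount]
  refine le_trans (Nat.card_le_card_of_injective Subtype.val Subtype.val_injective) ?_
  simp [Nat.card_eq_fintype_card]

lemma hlow_supermul (p : ℕ) (α δ : ℝ) (m n : ℕ) :
    hlowCount p m α δ * hlowCount p n α δ ≤ hlowCount p (m + n) α δ := by
  rw [hlowCount, hlowCount, hlowCount, ← Nat.card_prod]
  apply Nat.card_le_card_of_injective
    (f := fun z => ⟨Fin.append z.1.1 z.2.1, by
      obtain ⟨⟨w1, h1⟩, ⟨w2, h2⟩⟩ := z
      simp only [Fin.sum_univ_add, Fin.append_left, Fin.append_right]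
      push_cast
      nlinarith [h1, h2]⟩)
  rintro ⟨⟨w1, h1⟩, ⟨w2, h2⟩⟩ ⟨⟨w1', h1'⟩, ⟨w2', h2'⟩⟩ h
  have h0 : Fin.append w1 w2 = Fin.append w1' w2' := congrArg Subtype.val h
  have e1 : w1 = w1' := by
    funext i
    have := congrFun h0 (Fin.castAdd n i)
    simpa [Fin.append_left] using this
  have e2 : w2 = w2' := by
    funext i
    have := congrFun h0 (Fin.natAdd m i)
    simpa [Fin.append_right] using this
  simp [e1, e2]

lemma hlow_tendsto (p : ℕ) (hp : 2 ≤ p) {α δ : ℝ} (h : α - δ < (p : ℝ) - 1) :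
    ∃ L, Tendsto (fun n : ℕ => Real.log (hlowCount p n α δ) / (n * Real.log p)) atTop (nhds L) := by
  set u : ℕ → ℝ := fun n => Real.log (hlowCount p n α δ) with hu
  have hp1 : 1 ≤ p := by omega
  have hsub : Subadditive (fun n => -u n) := by
    intro m n
    show -u (m + n) ≤ -u m + -u n
    have key : u m + u n ≤ u (m + n) := by
      rcases Nat.eq_zero_or_pos m with rfl | hm
      · simp [hu, hlow_zero]
      rcases Nat.eq_zero_or_pos n with rfl | hn
      · simp [hu, hlow_zero]
      have c1 : 1 ≤ hlowCount p m α δ := hlow_pos p m hp1 hm h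
      have c2 : 1 ≤ hlowCount p n α δ := hlow_pos p n hp1 hn h
      have hpos : (0 : ℝ) < (hlowCount p m α δ : ℝ) * (hlowCount p n α δ : ℝ) := by
        have : (1 : ℝ) ≤ (hlowCount p m α δ : ℝ) := by exact_mod_cast c1
        have : (1 : ℝ) ≤ (hlowCount p n α δ : ℝ) := by exact_mod_cast c2
        positivity
      calc u m + u n
          = Real.log ((hlowCount p m α δ : ℝ) * (hlowCount p n α δ : ℝ)) := by
            rw [Real.log_mul (by positivity) (by positivity)]
        _ ≤ u (m + n) := by
            apply Real.log_le_log hpos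
            exact_mod_cast hlow_supermul p α δ m n
    linarith
  have hbdd : BddBelow (Set.range fun n : ℕ => (-u n) / n) := by
    refine ⟨-Real.log p, ?_⟩
    rintro x ⟨n, rfl⟩
    rcases Nat.eq_zero_or_pos n with rfl | hn
    · simp [Real.log_nonneg (by exact_mod_cast hp1 : (1 : ℝ) ≤ (p : ℝ))]
    have hn' : (0 : ℝ) < n := by exact_mod_cast hn
    have c1 : (1 : ℝ) ≤ (hlowCount p n α δ : ℝ) := by exact_mod_cast hlow_pos p n hp1 hn h
    have h2 : u n ≤ n * Real.log p := by
      calc u n ≤ Real.log ((p : ℝ) ^ n) := by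
            apply Real.log_le_log (by linarith)
            exact_mod_cast hlow_le p n α δ
        _ = (n : ℝ) * Real.log p := by rw [Real.log_pow]
    show -Real.log p ≤ -u n / n
    rw [neg_div, neg_le_neg_iff, div_le_iff₀ hn']
    linarith
  have ht := hsub.tendsto_lim hbdd
  refine ⟨-hsub.lim / Real.log p, ?_⟩
  have : Tendsto (fun n : ℕ => -((-u n) / n) / Real.log p) atTop (nhds (-hsub.lim / Real.log p)) :=
    ht.neg.div_const _
  refine this.congr fun n => ?_
  show -(-u n / n) / Real.log p = u n / (n * Real.log p)
  rw [mul_comm, ← div_div]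
  ring

theorem upperEntropy_symm' (p : ℕ) (hp : 2 ≤ p) (α : ℝ)
    (hα : 0 ≤ α) (hα' : α ≤ (p : ℝ) - 1) :
    (⨅ δ : {δ : ℝ // 0 < δ},
      limsup (fun n : ℕ => Real.log (hbarCount p n ((p : ℝ) - 1 - α) δ) / (n * Real.log p)) atTop)
    = ⨅ δ : {δ : ℝ // 0 < δ},
      liminf (fun n : ℕ => Real.log (hlowCount p n α δ) / (n * Real.log p)) atTop := by
  refine congrArg _ (funext fun δ => ?_)
  obtain ⟨δ, hδ⟩ := δ
  have hp1 : 1 ≤ p := by omega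
  simp only [hbar_eq_hlow p _ hp1 α δ]
  obtain ⟨L, hL⟩ := hlow_tendsto p hp (show α - δ < (p : ℝ) - 1 by linarith)
  rw [hL.limsup_eq, hL.liminf_eq]

/-- For an integer `p ≥ 2` and `0 ≤ α ≤ p-1`, `h̄(p-1-α) = h̲(α)`. -/
theorem upperEntropy_symm (p : ℕ) (hp : 2 ≤ p) (α : ℝ)
    (hα : 0 ≤ α) (hα' : α ≤ (p : ℝ) - 1) :
    upperEntropy p ((p : ℝ) - 1 - α) = lowerEntropy p α := by
  unfold upperEntropy lowerEntropy
  exact upperEntropy_symm' p hp α hα hα'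
end
end

section
/- Fix an integer p ≥ 2. Then the p-adic entropy function h is concave on [0, p−1]: for all α, β ∈ [0, p−1] and all λ ∈ (0,1), λ h(α) + (1−λ) h(β) ≤ h(λα + (1−λ)β). -/
open Filter MeasureTheory Set
open scoped ENNReal

noncomputable section

namespace EAux

def cnt (p n : ℕ) (lo hi : ℝ) : ℕ :=
  Nat.card {w : Fin n → Fin p //
    lo < ∑ i, ((w i : ℕ) : ℝ) ∧ (∑ i, ((w i : ℕ) : ℝ)) < hi}

lemma hcount_eq_cnt (p n : ℕ) (α δ : ℝ) :
    hcount p n α δ = cnt p n ((n:ℝ)*(α-δ)) ((n:ℝ)*(α+δ)) := rfl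

lemma cnt_mono (p n : ℕ) {lo hi lo' hi' : ℝ} (h1 : lo' ≤ lo) (h2 : hi ≤ hi') :
    cnt p n lo hi ≤ cnt p n lo' hi' := by
  apply Nat.card_le_card_of_injective
    (fun w => (⟨w.1, lt_of_le_of_lt h1 w.2.1, lt_of_lt_of_le w.2.2 h2⟩ :
      {w : Fin n → Fin p // lo' < ∑ i, ((w i : ℕ) : ℝ) ∧ (∑ i, ((w i : ℕ) : ℝ)) < hi'}))
  intro a b hab
  simpa [Subtype.ext_iff] using hab

lemma sum_append {p n m : ℕ} (w : Fin n → Fin p) (v : Fin m → Fin p) :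
    ∑ i, (((Fin.append w v i : Fin p) : ℕ) : ℝ)
      = (∑ i, ((w i : ℕ) : ℝ)) + ∑ i, ((v i : ℕ) : ℝ) := by
  rw [Fin.sum_univ_add (f := fun i => (((Fin.append w v i : Fin p) : ℕ) : ℝ))]
  simp [Fin.append_left, Fin.append_right]

lemma cnt_mul_le (p n m : ℕ) (lo1 hi1 lo2 hi2 : ℝ) :
    cnt p n lo1 hi1 * cnt p m lo2 hi2 ≤ cnt p (n + m) (lo1 + lo2) (hi1 + hi2) := by
  rw [cnt, cnt, cnt, ← Nat.card_prod]
  apply Nat.card_le_card_of_injective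
    (fun x => (⟨Fin.append x.1.1 x.2.1, by
        rw [sum_append]
        exact ⟨add_lt_add x.1.2.1 x.2.2.1, add_lt_add x.1.2.2 x.2.2.2⟩⟩ :
      {w : Fin (n+m) → Fin p // lo1 + lo2 < ∑ i, ((w i : ℕ) : ℝ) ∧
        (∑ i, ((w i : ℕ) : ℝ)) < hi1 + hi2}))
  rintro ⟨⟨w, hw⟩, ⟨v, hv⟩⟩ ⟨⟨w', hw'⟩, ⟨v', hv'⟩⟩ hab
  have h : Fin.append w v = Fin.append w' v' := by
    simpa [Subtype.ext_iff] using hab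
  have h1 : w = w' := by
    funext i
    have := congrFun h (Fin.castAdd m i)
    rwa [Fin.append_left, Fin.append_left] at this
  have h2 : v = v' := by
    funext i
    have := congrFun h (Fin.natAdd n i)
    rwa [Fin.append_right, Fin.append_right] at this
  simp [h1, h2]

lemma cnt_pow_le (p n : ℕ) (lo hi : ℝ) :
    ∀ k : ℕ, (cnt p n lo hi) ^ (k + 1) ≤ cnt p ((k + 1) * n) ((k + 1 : ℕ) * lo) ((k + 1 : ℕ) * hi)
  | 0 => by simp
  | (k + 1) => by
    calc (cnt p n lo hi) ^ (k + 1 + 1) = (cnt p n lo hi) ^ (k + 1) * cnt p n lo hi := by ring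
    _ ≤ cnt p ((k + 1) * n) ((k + 1 : ℕ) * lo) ((k + 1 : ℕ) * hi) * cnt p n lo hi :=
        Nat.mul_le_mul_right _ (cnt_pow_le p n lo hi k)
    _ ≤ cnt p ((k + 1) * n + n) ((k + 1 : ℕ) * lo + lo) ((k + 1 : ℕ) * hi + hi) :=
        cnt_mul_le _ _ _ _ _ _ _
    _ ≤ cnt p ((k + 1 + 1) * n) ((k + 1 + 1 : ℕ) * lo) ((k + 1 + 1 : ℕ) * hi) := by
        have e1 : (k + 1) * n + n = (k + 1 + 1) * n := by ring
        have e2 : ((k + 1 : ℕ) : ℝ) * lo + lo = ((k + 1 + 1 : ℕ) : ℝ) * lo := by push_cast; ring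
        have e3 : ((k + 1 : ℕ) : ℝ) * hi + hi = ((k + 1 + 1 : ℕ) : ℝ) * hi := by push_cast; ring
        rw [e1, e2, e3]

lemma exists_word (p n s : ℕ) (hp : 2 ≤ p) (hn : 1 ≤ n) (hs : s ≤ n * (p - 1)) :
    ∃ w : Fin n → Fin p, ∑ i, (w i : ℕ) = s := by
  obtain ⟨q, r, hrn, hsum⟩ : ∃ q r, r < n ∧ n * q + r = s :=
    ⟨s / n, s % n, Nat.mod_lt _ hn, Nat.div_add_mod s n⟩
  have hdig : ∀ i : Fin n, q + (if (i : ℕ) < r then 1 else 0) < p := by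
    intro i
    rcases Nat.eq_zero_or_pos r with h0 | h0
    · subst h0
      rw [if_neg (Nat.not_lt_zero _)]
      have : n * q ≤ n * (p - 1) := by omega
      have : q ≤ p - 1 := Nat.le_of_mul_le_mul_left this (by omega)
      omega
    · have : n * q < n * (p - 1) := by omega
      have : q < p - 1 := Nat.lt_of_mul_lt_mul_left this
      have h1 : (if (i : ℕ) < r then 1 else 0) ≤ 1 := by split <;> omega
      omega
  refine ⟨fun i => ⟨q + (if (i : ℕ) < r then 1 else 0), hdig i⟩, ?_⟩
  simp only
  rw [Finset.sum_add_distrib]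
  have h1 : ∑ _i : Fin n, q = n * q := by
    simp [Finset.sum_const, Finset.card_univ, mul_comm]
  have h2 : ∑ i : Fin n, (if (i : ℕ) < r then 1 else 0) = r := by
    rw [Fin.sum_univ_eq_sum_range (fun i => if i < r then 1 else 0) n]
    rw [← Finset.sum_range_add_sum_Ico _ (le_of_lt hrn)]
    have ha : ∑ i ∈ Finset.range r, (if i < r then 1 else 0) = r := by
      rw [Finset.sum_congr rfl (fun i hi => if_pos (Finset.mem_range.mp hi))]
      simp
    have hb : ∑ i ∈ Finset.Ico r n, (if i < r then 1 else 0) = 0 := by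
      apply Finset.sum_eq_zero
      intro i hi
      rw [if_neg]
      exact not_lt.mpr (Finset.mem_Ico.mp hi).1
    omega
  omega

lemma one_le_hcount (p n : ℕ) (α δ : ℝ) (hp : 2 ≤ p) (hα0 : 0 ≤ α) (hα1 : α ≤ (p : ℝ) - 1)
    (hδ : 1 < (n : ℝ) * δ) : 1 ≤ hcount p n α δ := by
  have hn : 1 ≤ n := by
    by_contra h
    push_neg at h
    interval_cases n
    simp at hδ; linarith
  set s := ⌊(n : ℝ) * α⌋₊ with hs
  have hnpos : (0:ℝ) < n := by exact_mod_cast hn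
  have h0 : (0:ℝ) ≤ (n:ℝ) * α := by positivity
  have hle : s ≤ n * (p - 1) := by
    have : (n:ℝ) * α ≤ ((n * (p-1) : ℕ) : ℝ) := by
      push_cast [Nat.cast_sub (by omega : 1 ≤ p)]
      nlinarith
    calc s ≤ ⌊((n * (p-1) : ℕ) : ℝ)⌋₊ := Nat.floor_mono this
    _ = n * (p - 1) := Nat.floor_natCast _
  obtain ⟨w, hw⟩ := exists_word p n s hp hn hle
  have hmem : (n : ℝ) * (α - δ) < ∑ i, ((w i : ℕ) : ℝ) ∧ (∑ i, ((w i : ℕ) : ℝ)) < n * (α + δ) := by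
    have hws : (∑ i, ((w i : ℕ) : ℝ)) = (s : ℝ) := by
      rw [← hw]; push_cast; rfl
    constructor
    · rw [hws]
      have := Nat.sub_one_lt_floor ((n : ℝ) * α)
      have : (n:ℝ) * α - 1 < s := by rw [hs]; exact Nat.sub_one_lt_floor _
      nlinarith [Nat.floor_le h0]
    · rw [hws]
      have := Nat.floor_le h0
      nlinarith
  have : Nonempty {w : Fin n → Fin p //
      (n : ℝ) * (α - δ) < ∑ i, ((w i : ℕ) : ℝ) ∧ (∑ i, ((w i : ℕ) : ℝ)) < n * (α + δ)} :=
    ⟨⟨w, hmem⟩⟩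
  exact Nat.one_le_iff_ne_zero.mpr (Nat.card_pos).ne'

lemma hcount_le (p n : ℕ) (α δ : ℝ) : hcount p n α δ ≤ p ^ n := by
  have := Nat.card_le_card_of_injective (Subtype.val :
    {w : Fin n → Fin p // (n : ℝ) * (α - δ) < ∑ i, ((w i : ℕ) : ℝ) ∧
      (∑ i, ((w i : ℕ) : ℝ)) < n * (α + δ)} → (Fin n → Fin p)) Subtype.val_injective
  rw [hcount, Nat.card_eq_fintype_card]
  simpa [Nat.card_eq_fintype_card] using this

lemma hcount_zero (p : ℕ) (α δ : ℝ) : hcount p 0 α δ = 0 := by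
  rw [hcount]
  haveI : IsEmpty {w : Fin 0 → Fin p //
      (0 : ℝ) * (α - δ) < ∑ i, ((w i : ℕ) : ℝ) ∧ (∑ i, ((w i : ℕ) : ℝ)) < 0 * (α + δ)} :=
    ⟨fun w => by have := w.2.1; simp at this⟩
  simpa using Nat.card_of_isEmpty

def φ (p : ℕ) (α δ : ℝ) (n : ℕ) : ℝ := Real.log (hcount p n α δ) / (n * Real.log p)

def L (p : ℕ) (α δ : ℝ) : ℝ := limsup (φ p α δ) atTop

lemma entropy_eq (p : ℕ) (α : ℝ) : entropy p α = ⨅ δ : {δ : ℝ // 0 < δ}, L p α δ := rfl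

variable {p : ℕ} (hp : 2 ≤ p)

lemma hq (hp : 2 ≤ p) : 0 < Real.log p :=
  Real.log_pos (by exact_mod_cast Nat.lt_of_lt_of_le one_lt_two hp)

lemma phi_nonneg (hp : 2 ≤ p) (α δ : ℝ) (n : ℕ) : 0 ≤ φ p α δ n := by
  apply div_nonneg _ (by positivity)
  rcases Nat.eq_zero_or_pos (hcount p n α δ) with h | h
  · simp [h]
  · exact Real.log_nonneg (by exact_mod_cast h)

lemma phi_le_one (hp : 2 ≤ p) (α δ : ℝ) (n : ℕ) : φ p α δ n ≤ 1 := by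
  rcases Nat.eq_zero_or_pos n with hn | hn
  · simp [φ, hn]
  rcases Nat.eq_zero_or_pos (hcount p n α δ) with h | h
  · simp [φ, h]
  rw [φ, div_le_one (mul_pos (by exact_mod_cast hn) (hq hp))]
  calc Real.log (hcount p n α δ) ≤ Real.log ((p : ℝ) ^ n) := by
        apply Real.log_le_log (by exact_mod_cast h)
        exact_mod_cast hcount_le p n α δ
  _ = n * Real.log p := by rw [Real.log_pow]

lemma phi_bddAbove (hp : 2 ≤ p) (α δ : ℝ) :
    IsBoundedUnder (· ≤ ·) atTop (φ p α δ) :=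
  isBoundedUnder_of ⟨1, fun n => phi_le_one hp α δ n⟩

lemma phi_bddBelow (hp : 2 ≤ p) (α δ : ℝ) :
    IsBoundedUnder (· ≥ ·) atTop (φ p α δ) :=
  isBoundedUnder_of ⟨0, fun n => phi_nonneg hp α δ n⟩

lemma L_nonneg (hp : 2 ≤ p) (α δ : ℝ) : 0 ≤ L p α δ :=
  le_limsup_of_frequently_le
    ((Filter.Eventually.of_forall (fun n => phi_nonneg hp α δ n)).frequently)
    (phi_bddAbove hp α δ)

lemma L_le_one (hp : 2 ≤ p) (α δ : ℝ) : L p α δ ≤ 1 :=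
  limsup_le_of_le ((phi_bddBelow hp α δ).isCoboundedUnder_le)
    (Filter.Eventually.of_forall (fun n => phi_le_one hp α δ n))

lemma entropy_le_L (hp : 2 ≤ p) (α : ℝ) {δ : ℝ} (hδ : 0 < δ) :
    entropy p α ≤ L p α δ := by
  have hb : BddBelow (Set.range (fun d : {δ : ℝ // 0 < δ} => L p α (d : ℝ))) := by
    refine ⟨0, ?_⟩
    rintro x ⟨d, rfl⟩
    exact L_nonneg hp α d
  exact ciInf_le hb ⟨δ, hδ⟩

lemma L_le_iSup (hp : 2 ≤ p) (α δ : ℝ) : L p α δ ≤ ⨆ n, φ p α δ n :=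
  limsup_le_of_le ((phi_bddBelow hp α δ).isCoboundedUnder_le)
    (Filter.Eventually.of_forall (fun n =>
      le_ciSup ⟨1, by rintro x ⟨k, rfl⟩; exact phi_le_one hp α δ k⟩ n))


variable {p : ℕ}

set_option maxHeartbeats 2000000 in
lemma core (hp : 2 ≤ p) {a b l δ : ℝ}
    (ha0 : 0 ≤ a) (ha1 : a ≤ (p:ℝ) - 1) (hb0 : 0 ≤ b) (hb1 : b ≤ (p:ℝ) - 1)
    (hl0 : 0 < l) (hl1 : l < 1) (hδ : 0 < δ)
    {n m : ℕ} (hn : 1 ≤ n) (hm : 1 ≤ m)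
    (hHa : 1 ≤ hcount p n a (δ/2)) (hHb : 1 ≤ hcount p m b (δ/2)) :
    l * φ p a (δ/2) n + (1 - l) * φ p b (δ/2) m
      ≤ L p (l * a + (1 - l) * b) δ := by
  obtain ⟨q, hqdef⟩ : ∃ x, x = Real.log p := ⟨_, rfl⟩
  obtain ⟨fn, hfn⟩ : ∃ x, x = φ p a (δ/2) n := ⟨_, rfl⟩
  obtain ⟨gm, hgm⟩ : ∃ x, x = φ p b (δ/2) m := ⟨_, rfl⟩
  rw [← hfn, ← hgm]
  have hq0 : 0 < q := hqdef ▸ hq hp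
  have hf0 : 0 ≤ fn := hfn ▸ phi_nonneg hp _ _ _
  have hf1 : fn ≤ 1 := hfn ▸ phi_le_one hp _ _ _
  have hg0 : 0 ≤ gm := hgm ▸ phi_nonneg hp _ _ _
  have hg1 : gm ≤ 1 := hgm ▸ phi_le_one hp _ _ _
  have hn1 : (1:ℝ) ≤ (n:ℝ) := by exact_mod_cast hn
  have hm1 : (1:ℝ) ≤ (m:ℝ) := by exact_mod_cast hm
  have hnpos : (0:ℝ) < n := by linarith
  have hmpos : (0:ℝ) < m := by linarith
  have hl' : 0 < 1 - l := by linarith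
  have hLA : (↑n * q) * fn = Real.log (hcount p n a (δ/2)) := by
    rw [hfn, hqdef, φ, mul_div_assoc']
    exact mul_div_cancel_left₀ _ (ne_of_gt (mul_pos hnpos (hq hp)))
  have hLB : (↑m * q) * gm = Real.log (hcount p m b (δ/2)) := by
    rw [hgm, hqdef, φ, mul_div_assoc']
    exact mul_div_cancel_left₀ _ (ne_of_gt (mul_pos hmpos (hq hp)))
  apply le_of_forall_pos_le_add
  intro ε hε
  have freq : ∃ᶠ N in atTop, (l * fn + (1 - l) * gm - ε) ≤ φ p (l*a + (1-l)*b) δ N := by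
    rw [frequently_atTop]
    intro K
    obtain ⟨t, htK, ht1', hTε, hTδ⟩ :
        ∃ t : ℕ, K ≤ t ∧ (1:ℝ) ≤ (t:ℝ) ∧ 2*((n:ℝ)+m)/ε ≤ (t:ℝ) ∧ 2*((n:ℝ)+m)*p/δ ≤ (t:ℝ) := by
      refine ⟨K + 1 + ⌈2*((n:ℝ)+m)/ε⌉₊ + ⌈2*((n:ℝ)+m)*p/δ⌉₊, by omega, ?_, ?_, ?_⟩
      · exact_mod_cast (by omega : 1 ≤ K + 1 + ⌈2*((n:ℝ)+m)/ε⌉₊ + ⌈2*((n:ℝ)+m)*p/δ⌉₊)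
      · push_cast
        have h1 := Nat.le_ceil (2*((n:ℝ)+m)/ε)
        have h2 : (0:ℝ) ≤ (K:ℝ) := Nat.cast_nonneg _
        have h3 : (0:ℝ) ≤ (⌈2*((n:ℝ)+m)*p/δ⌉₊ : ℝ) := Nat.cast_nonneg _
        linarith
      · push_cast
        have h1 := Nat.le_ceil (2*((n:ℝ)+m)*p/δ)
        have h2 : (0:ℝ) ≤ (K:ℝ) := Nat.cast_nonneg _
        have h3 : (0:ℝ) ≤ (⌈2*((n:ℝ)+m)/ε⌉₊ : ℝ) := Nat.cast_nonneg _
        linarith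
    have hlmt : (0:ℝ) < l * m * t := by positivity
    have hlnt : (0:ℝ) < (1-l) * n * t := by positivity
    obtain ⟨k₁, hk1, hk1l, hk1u⟩ :
        ∃ k : ℕ, 1 ≤ k ∧ l * m * t ≤ (k:ℝ) ∧ (k:ℝ) ≤ l * m * t + 1 :=
      ⟨⌈l * m * t⌉₊, Nat.one_le_iff_ne_zero.mpr (Nat.ceil_pos.mpr hlmt).ne',
        Nat.le_ceil _, (Nat.ceil_lt_add_one hlmt.le).le⟩
    obtain ⟨k₂, hk2, hk2l, hk2u⟩ :
        ∃ k : ℕ, 1 ≤ k ∧ (1-l) * n * t ≤ (k:ℝ) ∧ (k:ℝ) ≤ (1-l) * n * t + 1 :=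
      ⟨⌈(1-l) * n * t⌉₊, Nat.one_le_iff_ne_zero.mpr (Nat.ceil_pos.mpr hlnt).ne',
        Nat.le_ceil _, (Nat.ceil_lt_add_one hlnt.le).le⟩
    obtain ⟨N, hNdef⟩ : ∃ N, N = k₁ * n + k₂ * m := ⟨_, rfl⟩
    have hNcast : (N:ℝ) = (k₁:ℝ) * n + (k₂:ℝ) * m := by rw [hNdef]; push_cast; ring
    have hnm1 : (1:ℝ) ≤ ↑n * ↑m := by nlinarith
    have hNt : (t:ℝ) ≤ (N:ℝ) := by
      rw [hNcast]
      have h1 : l * ↑m * ↑t * ↑n ≤ (k₁:ℝ) * ↑n := mul_le_mul_of_nonneg_right hk1l (by positivity)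
      have h2 : (1-l) * ↑n * ↑t * ↑m ≤ (k₂:ℝ) * ↑m := mul_le_mul_of_nonneg_right hk2l (by positivity)
      have h3 : (t:ℝ) * 1 ≤ (t:ℝ) * (↑n * ↑m) := mul_le_mul_of_nonneg_left hnm1 (by positivity)
      nlinarith
    refine ⟨N, ?_, ?_⟩
    · -- K ≤ N
      have : (K:ℝ) ≤ (N : ℝ) := le_trans (by exact_mod_cast htK) hNt
      exact_mod_cast this
    · -- main estimate at N = k₁ n + k₂ m
      have hN0 : (0:ℝ) < N := lt_of_lt_of_le (by linarith) hNt
      -- bound |e| where e = k₁ n - N l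
      have heu : (k₁:ℝ) * ↑n - (N:ℝ) * l ≤ ↑n + ↑m := by
        rw [hNcast]
        have A1 : (k₁:ℝ) * (↑n * (1-l)) ≤ (l * ↑m * ↑t + 1) * (↑n * (1-l)) :=
          mul_le_mul_of_nonneg_right hk1u (by positivity)
        have A2 : ((1-l) * ↑n * ↑t) * (↑m * l) ≤ (k₂:ℝ) * (↑m * l) :=
          mul_le_mul_of_nonneg_right hk2l (by positivity)
        nlinarith
      have hel : -(↑n + ↑m) ≤ (k₁:ℝ) * ↑n - (N:ℝ) * l := by
        rw [hNcast]
        have B1 : (l * ↑m * ↑t) * (↑n * (1-l)) ≤ (k₁:ℝ) * (↑n * (1-l)) :=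
          mul_le_mul_of_nonneg_right hk1l (by positivity)
        have B2 : (k₂:ℝ) * (↑m * l) ≤ ((1-l) * ↑n * ↑t + 1) * (↑m * l) :=
          mul_le_mul_of_nonneg_right hk2u (by positivity)
        nlinarith
      have he : |(k₁:ℝ) * ↑n - (N:ℝ) * l| ≤ ↑n + ↑m := abs_le.mpr ⟨hel, heu⟩
      -- counting chain
      obtain ⟨j₁, hj₁⟩ : ∃ j, k₁ = j + 1 := ⟨k₁ - 1, by omega⟩
      obtain ⟨j₂, hj₂⟩ : ∃ j, k₂ = j + 1 := ⟨k₂ - 1, by omega⟩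
      have c1 : hcount p n a (δ/2) ^ k₁
          ≤ cnt p (k₁*n) ((k₁:ℕ) * ((n:ℝ)*(a-δ/2))) ((k₁:ℕ) * ((n:ℝ)*(a+δ/2))) := by
        rw [hcount_eq_cnt, hj₁]
        exact cnt_pow_le p n _ _ j₁
      have c2 : hcount p m b (δ/2) ^ k₂
          ≤ cnt p (k₂*m) ((k₂:ℕ) * ((m:ℝ)*(b-δ/2))) ((k₂:ℕ) * ((m:ℝ)*(b+δ/2))) := by
        rw [hcount_eq_cnt, hj₂]
        exact cnt_pow_le p m _ _ j₂
      have c3 : hcount p n a (δ/2) ^ k₁ * hcount p m b (δ/2) ^ k₂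
          ≤ cnt p N ((k₁:ℕ) * ((n:ℝ)*(a-δ/2)) + (k₂:ℕ) * ((m:ℝ)*(b-δ/2)))
              ((k₁:ℕ) * ((n:ℝ)*(a+δ/2)) + (k₂:ℕ) * ((m:ℝ)*(b+δ/2))) := by
        rw [hNdef]
        exact le_trans (Nat.mul_le_mul c1 c2) (cnt_mul_le p (k₁*n) (k₂*m) _ _ _ _)
      -- numeric interval inclusion
      have habp : |a - b| ≤ (p:ℝ) := by
        have : (2:ℝ) ≤ p := by exact_mod_cast hp
        rw [abs_le]; constructor <;> linarith
      have habs : |(k₁:ℝ) * ↑n - (N:ℝ) * l| * |a - b| ≤ (↑n + ↑m) * p :=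
        mul_le_mul he habp (abs_nonneg _) (by positivity)
      have hmull : -((↑n + ↑m) * (p:ℝ)) ≤ ((k₁:ℝ) * ↑n - (N:ℝ) * l) * (a - b) := by
        have h1 := neg_abs_le (((k₁:ℝ) * ↑n - (N:ℝ) * l) * (a - b))
        rw [abs_mul] at h1
        linarith
      have hmulu : ((k₁:ℝ) * ↑n - (N:ℝ) * l) * (a - b) ≤ (↑n + ↑m) * (p:ℝ) := by
        have h1 := le_abs_self (((k₁:ℝ) * ↑n - (N:ℝ) * l) * (a - b))
        rw [abs_mul] at h1
        linarith
      have hNδ : (↑n + ↑m) * (p:ℝ) ≤ (N:ℝ) * δ / 2 := by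
        rw [div_le_iff₀ hδ] at hTδ
        have h4 : (t:ℝ) * δ ≤ (N:ℝ) * δ := mul_le_mul_of_nonneg_right hNt hδ.le
        linarith
      have ineqA : (N:ℝ) * ((l*a + (1-l)*b) - δ)
          ≤ (k₁:ℕ) * ((n:ℝ)*(a-δ/2)) + (k₂:ℕ) * ((m:ℝ)*(b-δ/2)) := by
        have hid : (k₁:ℝ) * ((n:ℝ)*(a-δ/2)) + (k₂:ℝ) * ((m:ℝ)*(b-δ/2))
            - (N:ℝ) * ((l*a + (1-l)*b) - δ)
            = ((k₁:ℝ) * ↑n - (N:ℝ) * l) * (a - b) + (N:ℝ) * δ / 2 := by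
          rw [hNcast]; ring
        linarith
      have ineqB : (k₁:ℕ) * ((n:ℝ)*(a+δ/2)) + (k₂:ℕ) * ((m:ℝ)*(b+δ/2))
          ≤ (N:ℝ) * ((l*a + (1-l)*b) + δ) := by
        have hid : (k₁:ℝ) * ((n:ℝ)*(a+δ/2)) + (k₂:ℝ) * ((m:ℝ)*(b+δ/2))
            - (N:ℝ) * ((l*a + (1-l)*b) + δ)
            = ((k₁:ℝ) * ↑n - (N:ℝ) * l) * (a - b) - (N:ℝ) * δ / 2 := by
          rw [hNcast]; ring
        linarith
      have c4 : hcount p n a (δ/2) ^ k₁ * hcount p m b (δ/2) ^ k₂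
          ≤ hcount p N (l*a + (1-l)*b) δ :=
        le_trans (le_trans c3 (cnt_mono p N ineqA ineqB))
          (le_of_eq (hcount_eq_cnt p N (l*a + (1-l)*b) δ).symm)
      -- take logs
      have hHa0 : (0:ℝ) < (hcount p n a (δ/2) : ℝ) := by exact_mod_cast hHa
      have hHb0 : (0:ℝ) < (hcount p m b (δ/2) : ℝ) := by exact_mod_cast hHb
      have hlog : (k₁:ℝ) * Real.log (hcount p n a (δ/2)) + (k₂:ℝ) * Real.log (hcount p m b (δ/2))
          ≤ Real.log (hcount p N (l*a + (1-l)*b) δ) := by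
        have h1 : ((hcount p n a (δ/2) : ℝ)) ^ k₁ * ((hcount p m b (δ/2) : ℝ)) ^ k₂
            ≤ (hcount p N (l*a + (1-l)*b) δ : ℝ) := by exact_mod_cast c4
        have h2 := Real.log_le_log (by positivity) h1
        rwa [Real.log_mul (by positivity) (by positivity), Real.log_pow, Real.log_pow] at h2
      -- conclude
      rw [φ, ← hqdef, le_div_iff₀ (mul_pos hN0 hq0)]
      have hεN : 2 * (↑n + ↑m) ≤ ε * N := by
        rw [div_le_iff₀ hε] at hTε
        have h4 : ε * (t:ℝ) ≤ ε * (N:ℝ) := mul_le_mul_of_nonneg_left hNt hε.le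
        linarith
      have hfg : |fn - gm| ≤ 1 := abs_le.mpr ⟨by linarith, by linarith⟩
      have h2 : |((k₁:ℝ) * ↑n - (N:ℝ) * l) * (fn - gm)| ≤ ↑n + ↑m := by
        rw [abs_mul]
        calc |(k₁:ℝ) * ↑n - (N:ℝ) * l| * |fn - gm| ≤ (↑n + ↑m) * 1 :=
              mul_le_mul he hfg (abs_nonneg _) (by positivity)
        _ = ↑n + ↑m := by ring
      have h3 : -(↑n + ↑m : ℝ) ≤ ((k₁:ℝ) * ↑n - (N:ℝ) * l) * (fn - gm) := (abs_le.mp h2).1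
      have hid2 : (k₁:ℝ) * ↑n * fn + (k₂:ℝ) * ↑m * gm
          = (N:ℝ) * (l * fn + (1-l) * gm) + ((k₁:ℝ) * ↑n - (N:ℝ) * l) * (fn - gm) := by
        rw [hNcast]; ring
      have hinner : (l * fn + (1-l) * gm - ε) * (N:ℝ) ≤ (k₁:ℝ) * ↑n * fn + (k₂:ℝ) * ↑m * gm := by
        linarith [hid2, h3, hεN]
      calc (l * fn + (1 - l) * gm - ε) * ((N:ℝ) * q)
          = ((l * fn + (1-l) * gm - ε) * (N:ℝ)) * q := by ring
        _ ≤ ((k₁:ℝ) * ↑n * fn + (k₂:ℝ) * ↑m * gm) * q :=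
            mul_le_mul_of_nonneg_right hinner hq0.le
        _ = (k₁:ℝ) * ((↑n * q) * fn) + (k₂:ℝ) * ((↑m * q) * gm) := by ring
        _ = (k₁:ℝ) * Real.log (hcount p n a (δ/2)) + (k₂:ℝ) * Real.log (hcount p m b (δ/2)) := by
            rw [hLA, hLB]
        _ ≤ Real.log (hcount p N (l*a + (1-l)*b) δ) := hlog
  have hbound := le_limsup_of_frequently_le freq (phi_bddAbove hp (l*a + (1-l)*b) δ)
  rw [L]
  linarith

lemma exists_one_le (hp : 2 ≤ p) {α δ : ℝ} (hα0 : 0 ≤ α) (hα1 : α ≤ (p : ℝ) - 1)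
    (hδ : 0 < δ) : ∃ k, 1 ≤ k ∧ 1 ≤ hcount p k α δ := by
  refine ⟨⌊1/δ⌋₊ + 1, by omega, one_le_hcount p _ α δ hp hα0 hα1 ?_⟩
  have h1 : 1/δ < ((⌊1/δ⌋₊ + 1 : ℕ) : ℝ) := by
    push_cast
    exact Nat.lt_floor_add_one _
  rw [div_lt_iff₀ hδ] at h1
  exact h1

lemma pos_of_one_le_hcount {n : ℕ} {α δ : ℝ} (h : 1 ≤ hcount p n α δ) : 1 ≤ n := by
  rcases Nat.eq_zero_or_pos n with h0 | h0
  · rw [h0, hcount_zero] at h; omega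
  · exact h0

lemma combo (hp : 2 ≤ p) {a b l δ : ℝ}
    (ha0 : 0 ≤ a) (ha1 : a ≤ (p:ℝ) - 1) (hb0 : 0 ≤ b) (hb1 : b ≤ (p:ℝ) - 1)
    (hl0 : 0 < l) (hl1 : l < 1) (hδ : 0 < δ) (n m : ℕ) :
    l * φ p a (δ/2) n + (1 - l) * φ p b (δ/2) m ≤ L p (l * a + (1 - l) * b) δ := by
  have hδ2 : 0 < δ/2 := by linarith
  obtain ⟨n₀, hn₀, hn₀cnt⟩ := exists_one_le hp ha0 ha1 hδ2
  obtain ⟨m₀, hm₀, hm₀cnt⟩ := exists_one_le hp hb0 hb1 hδ2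
  have hl' : 0 < 1 - l := by linarith
  rcases Nat.eq_zero_or_pos (hcount p n a (δ/2)) with h1 | h1 <;>
    rcases Nat.eq_zero_or_pos (hcount p m b (δ/2)) with h2 | h2
  · have e1 : φ p a (δ/2) n = 0 := by simp [φ, h1]
    have e2 : φ p b (δ/2) m = 0 := by simp [φ, h2]
    rw [e1, e2]
    have := core hp ha0 ha1 hb0 hb1 hl0 hl1 hδ hn₀ hm₀ hn₀cnt hm₀cnt
    nlinarith [phi_nonneg hp a (δ/2) n₀, phi_nonneg hp b (δ/2) m₀]
  · have e1 : φ p a (δ/2) n = 0 := by simp [φ, h1]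
    rw [e1]
    have := core hp ha0 ha1 hb0 hb1 hl0 hl1 hδ hn₀ (pos_of_one_le_hcount h2) hn₀cnt h2
    nlinarith [phi_nonneg hp a (δ/2) n₀]
  · have e2 : φ p b (δ/2) m = 0 := by simp [φ, h2]
    rw [e2]
    have := core hp ha0 ha1 hb0 hb1 hl0 hl1 hδ (pos_of_one_le_hcount h1) hm₀ h1 hm₀cnt
    nlinarith [phi_nonneg hp b (δ/2) m₀]
  · exact core hp ha0 ha1 hb0 hb1 hl0 hl1 hδ (pos_of_one_le_hcount h1)
      (pos_of_one_le_hcount h2) h1 h2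

lemma L_combo (hp : 2 ≤ p) {a b l δ : ℝ}
    (ha0 : 0 ≤ a) (ha1 : a ≤ (p:ℝ) - 1) (hb0 : 0 ≤ b) (hb1 : b ≤ (p:ℝ) - 1)
    (hl0 : 0 < l) (hl1 : l < 1) (hδ : 0 < δ) :
    l * L p a (δ/2) + (1 - l) * L p b (δ/2) ≤ L p (l * a + (1 - l) * b) δ := by
  have hl' : 0 < 1 - l := by linarith
  have hbb : BddAbove (Set.range (φ p b (δ/2))) :=
    ⟨1, by rintro x ⟨k, rfl⟩; exact phi_le_one hp _ _ k⟩
  have hba : BddAbove (Set.range (φ p a (δ/2))) :=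
    ⟨1, by rintro x ⟨k, rfl⟩; exact phi_le_one hp _ _ k⟩
  have step1 : ∀ n : ℕ, (⨆ m, φ p b (δ/2) m) * (1 - l)
      ≤ L p (l * a + (1 - l) * b) δ - l * φ p a (δ/2) n := by
    intro n
    rw [← le_div_iff₀ hl']
    apply ciSup_le
    intro m
    rw [le_div_iff₀ hl']
    linarith [combo hp ha0 ha1 hb0 hb1 hl0 hl1 hδ n m]
  have step2 : (⨆ n, φ p a (δ/2) n) * l
      ≤ L p (l * a + (1 - l) * b) δ - (1 - l) * (⨆ m, φ p b (δ/2) m) := by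
    rw [← le_div_iff₀ hl0]
    apply ciSup_le
    intro n
    rw [le_div_iff₀ hl0]
    linarith [step1 n]
  have hLa := L_le_iSup hp a (δ/2)
  have hLb := L_le_iSup hp b (δ/2)
  nlinarith [hLa, hLb]

end EAux

/-- For an integer `p ≥ 2`, the `p`-adic entropy function is concave on
`[0, p-1]`: for all `α, β ∈ [0,p-1]` and `λ ∈ (0,1)`,
`λ h(α) + (1-λ) h(β) ≤ h(λα + (1-λ)β)`. -/
theorem entropy_concaveOn (p : ℕ) (hp : 2 ≤ p) :
    ∀ a ∈ Icc (0 : ℝ) ((p : ℝ) - 1), ∀ b ∈ Icc (0 : ℝ) ((p : ℝ) - 1),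
      ∀ l : ℝ, l ∈ Ioo (0 : ℝ) 1 →
        l * entropy p a + (1 - l) * entropy p b ≤ entropy p (l * a + (1 - l) * b) := by
  rintro a ⟨ha0, ha1⟩ b ⟨hb0, hb1⟩ l ⟨hl0, hl1⟩
  have hl' : 0 < 1 - l := by linarith
  show _ ≤ ⨅ δ : {δ : ℝ // 0 < δ}, EAux.L p (l * a + (1 - l) * b) δ
  apply le_ciInf
  rintro ⟨δ, hδ⟩
  have hδ2 : 0 < δ/2 := by linarith
  have h1 : entropy p a ≤ EAux.L p a (δ/2) := EAux.entropy_le_L hp a hδ2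
  have h2 : entropy p b ≤ EAux.L p b (δ/2) := EAux.entropy_le_L hp b hδ2
  have h3 := EAux.L_combo hp ha0 ha1 hb0 hb1 hl0 hl1 hδ
  calc l * entropy p a + (1 - l) * entropy p b
      ≤ l * EAux.L p a (δ/2) + (1 - l) * EAux.L p b (δ/2) := by nlinarith
  _ ≤ EAux.L p (l * a + (1 - l) * b) δ := h3
end
end

section
/- Fix an integer p ≥ 2. Then the p-adic entropy function h is continuous on [0, p−1]. -/
/-!
The entropy `h` is upper semicontinuous, being an infimum over `δ` of quantities that are
monotone in the window `(α - δ, α + δ)`. Appending to a word of length `k` with digit mean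
near `α₀` any word of length `≈ (1 - t) k / t` with digit mean near `β` gives
`t h(α₀) ≤ h(t α₀ + (1 - t) β)`. A Chernoff bound gives `h(0) = 0`, and `h(p - 1) = 0` by the
symmetry `x ↦ p - 1 - x` of the digits. So `h` lies above the tent over `[0, p - 1]` with apex
`(α₀, h(α₀))`, which gives lower semicontinuity at `α₀`.
-/

open Filter MeasureTheory Set
open scoped ENNReal

noncomputable section

open Topology

theorem monotone_log_natCast : Monotone fun n : ℕ => Real.log n := by
  intro a b hab
  rcases a.eq_zero_or_pos with rfl | ha
  · simpa using Real.log_natCast_nonneg b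
  · exact Real.log_le_log (by exact_mod_cast ha) (by exact_mod_cast hab)

theorem lowerSemicontinuousWithinAt_of_le_of_continuousWithinAt {α β : Type*}
    [TopologicalSpace α] [LinearOrder β] [TopologicalSpace β] [OrderTopology β]
    {f g : α → β} {s : Set α} {x : α} (hg : ContinuousWithinAt g s x)
    (hgf : ∀ y ∈ s, g y ≤ f y) (hx : f x ≤ g x) : LowerSemicontinuousWithinAt f s x := by
  intro y hy
  filter_upwards [hg.eventually (lt_mem_nhds (hy.trans_le hx)), self_mem_nhdsWithin]
    with z hgz hz
  exact hgz.trans_le (hgf z hz)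

theorem continuousOn_Icc_of_upperSemicontinuousOn_of_mul_le_convex_comb {f : ℝ → ℝ} {a b : ℝ}
    (husc : UpperSemicontinuousOn f (Icc a b)) (ha : f a = 0) (hb : f b = 0)
    (hconvex : ∀ x ∈ Icc a b, ∀ y ∈ Icc a b, ∀ t ∈ Icc (0 : ℝ) 1,
      t * f x ≤ f (t * x + (1 - t) * y)) :
    ContinuousOn f (Icc a b) := by
  have hnonneg : ∀ y ∈ Icc a b, 0 ≤ f y := fun y hy => by
    simpa using hconvex y hy y hy 0 ⟨le_rfl, zero_le_one⟩
  rw [continuousOn_iff_lower_upperSemicontinuousOn]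
  refine ⟨fun x₀ hx₀ => ?_, husc⟩
  rcases eq_endpoints_or_mem_Ioo_of_mem_Icc hx₀ with rfl | rfl | ⟨hax₀, hx₀b⟩
  · exact lowerSemicontinuousWithinAt_of_le_of_continuousWithinAt continuousWithinAt_const
      (ha ▸ hnonneg) le_rfl
  · exact lowerSemicontinuousWithinAt_of_le_of_continuousWithinAt continuousWithinAt_const
      (hb ▸ hnonneg) le_rfl
  -- the tent with apex `(x₀, f x₀)` over `[a, b]` is a continuous minorant of `f`
  have hside : ∀ y ∈ Icc a b, ∀ x, y ≠ x₀ → (x - y) / (x₀ - y) ∈ Icc (0 : ℝ) 1 →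
      f x₀ * ((x - y) / (x₀ - y)) ≤ f x := by
    intro y hy x hyx₀ ht
    have hx : (x - y) / (x₀ - y) * x₀ + (1 - (x - y) / (x₀ - y)) * y = x := by
      field_simp [sub_ne_zero.2 hyx₀.symm]
      ring
    simpa only [mul_comm (f x₀), hx] using hconvex x₀ hx₀ y hy _ ht
  refine lowerSemicontinuousWithinAt_of_le_of_continuousWithinAt
    (g := fun x => f x₀ * min ((x - a) / (x₀ - a)) ((x - b) / (x₀ - b))) (by fun_prop)
    (fun x hx => ?_) ?_
  · rcases le_total x x₀ with hxx₀ | hx₀x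
    · refine (mul_le_mul_of_nonneg_left (min_le_left _ _) (hnonneg x₀ hx₀)).trans ?_
      refine hside a ⟨le_rfl, hax₀.le.trans hx₀b.le⟩ x hax₀.ne ⟨?_, ?_⟩
      · exact div_nonneg (by linarith [hx.1]) (by linarith)
      · exact div_le_one_of_le₀ (by linarith) (by linarith)
    · refine (mul_le_mul_of_nonneg_left (min_le_right _ _) (hnonneg x₀ hx₀)).trans ?_
      refine hside b ⟨hax₀.le.trans hx₀b.le, le_rfl⟩ x hx₀b.ne' ⟨?_, ?_⟩
      · exact div_nonneg_of_nonpos (by linarith [hx.2]) (by linarith)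
      · exact (div_le_one_of_neg (by linarith)).2 (by linarith)
  · simp [div_self (sub_ne_zero.2 hax₀.ne'), div_self (sub_ne_zero.2 hx₀b.ne)]

section

variable {p : ℕ}

theorem hcount_le_pow (p n : ℕ) (α δ : ℝ) : hcount p n α δ ≤ p ^ n :=
  (Finite.card_subtype_le _).trans_eq (by simp)

theorem hcount_mono (n : ℕ) {α δ α' δ' : ℝ} (hlo : α' - δ' ≤ α - δ) (hhi : α + δ ≤ α' + δ') :
    hcount p n α δ ≤ hcount p n α' δ' := by
  refine Finite.card_le_of_embedding ⟨fun w => ⟨w.1, ?_, ?_⟩, fun _ _ h => ?_⟩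
  · exact (mul_le_mul_of_nonneg_left hlo n.cast_nonneg).trans_lt w.2.1
  · exact w.2.2.trans_le (mul_le_mul_of_nonneg_left hhi n.cast_nonneg)
  · exact Subtype.ext (congrArg Subtype.val h :)

theorem sum_append_digits {k m : ℕ} (u : Fin k → Fin p) (v : Fin m → Fin p) :
    ∑ i, (((Fin.append u v i : Fin p) : ℕ) : ℝ) = ∑ i, ((u i : ℕ) : ℝ) + ∑ i, ((v i : ℕ) : ℝ) := by
  simp [Fin.sum_univ_add]

theorem hcount_mul_hcount_le (k m : ℕ) {α δ α₁ δ₁ α₂ δ₂ : ℝ}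
    (h : |((k + m : ℕ) : ℝ) * α - (k * α₁ + m * α₂)|
      ≤ ((k + m : ℕ) : ℝ) * δ - (k * δ₁ + m * δ₂)) :
    hcount p k α₁ δ₁ * hcount p m α₂ δ₂ ≤ hcount p (k + m) α δ := by
  obtain ⟨hlo, hhi⟩ := abs_le.1 h
  rw [hcount, hcount, hcount, ← Nat.card_prod]
  refine Finite.card_le_of_embedding
    ⟨fun uv => ⟨Fin.append uv.1.1 uv.2.1, ?_, ?_⟩, fun uv uv' h => ?_⟩
  · rw [sum_append_digits]
    linarith [uv.1.2.1, uv.2.2.1]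
  · rw [sum_append_digits]
    linarith [uv.1.2.2, uv.2.2.2]
  · have := (Fin.appendEquiv k m).injective (a₁ := (uv.1.1, uv.2.1)) (a₂ := (uv'.1.1, uv'.2.1))
      (congrArg Subtype.val h)
    simp only [Prod.mk.injEq] at this
    ext1 <;> exact Subtype.ext (by simp [this])

theorem exists_digits_sum_eq (hp : 1 ≤ p) :
    ∀ (n s : ℕ), s ≤ n * (p - 1) → ∃ w : Fin n → Fin p, ∑ i, (w i : ℕ) = s
  | 0, s, hs => ⟨Fin.elim0, by simp_all⟩
  | n + 1, s, hs => by
    obtain ⟨w, hw⟩ := exists_digits_sum_eq hp n (s - min s (p - 1)) (by rw [add_mul] at hs; omega)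
    refine ⟨Fin.cons ⟨min s (p - 1), by omega⟩ w, ?_⟩
    simp only [Fin.sum_univ_succ, Fin.cons_zero, Fin.cons_succ, hw]
    omega

theorem one_le_hcount {n : ℕ} {α δ : ℝ} (hα : α ∈ Icc 0 ((p : ℝ) - 1)) (hnδ : 1 < n * δ) :
    1 ≤ hcount p n α δ := by
  have hp : 1 ≤ p := by exact_mod_cast (by linarith [hα.1.trans hα.2] : (1 : ℝ) ≤ p)
  have hfloor : ⌊n * α⌋₊ ≤ n * (p - 1) := by
    refine Nat.floor_le_of_le ?_
    push_cast [Nat.cast_sub hp]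
    exact mul_le_mul_of_nonneg_left hα.2 n.cast_nonneg
  obtain ⟨w, hw⟩ := exists_digits_sum_eq hp n _ hfloor
  have hsum : ∑ i, ((w i : ℕ) : ℝ) = ⌊n * α⌋₊ := by exact_mod_cast hw
  have hnα : 0 ≤ n * α := mul_nonneg n.cast_nonneg hα.1
  refine Nat.one_le_iff_ne_zero.2 (Nat.card_pos_iff.2 ⟨⟨⟨w, ?_, ?_⟩⟩, inferInstance⟩).ne'
  · rw [hsum]; linarith [Nat.lt_floor_add_one (n * α)]
  · rw [hsum]; linarith [Nat.floor_le hnα]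

theorem sum_rev_digits {n : ℕ} (w : Fin n → Fin p) :
    ∑ i, (((w i).rev : ℕ) : ℝ) = n * ((p : ℝ) - 1) - ∑ i, ((w i : ℕ) : ℝ) := by
  have h : ∀ i, (((w i).rev : ℕ) : ℝ) = ((p : ℝ) - 1) - ((w i : ℕ) : ℝ) := fun i => by
    rw [Fin.val_rev, Nat.cast_sub (w i).2]
    push_cast
    ring
  simp only [h, Finset.sum_sub_distrib, Finset.sum_const, Finset.card_univ, Fintype.card_fin,
    nsmul_eq_mul]
  ring

theorem hcount_reflect (n : ℕ) (α δ : ℝ) :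
    hcount p n ((p : ℝ) - 1 - α) δ = hcount p n α δ := by
  refine Nat.card_congr (Equiv.subtypeEquiv (Equiv.piCongrRight fun _ => Fin.revPerm) ?_)
  intro w
  simp only [Equiv.piCongrRight_apply, Pi.map_apply, Fin.revPerm_apply, sum_rev_digits]
  constructor <;> rintro ⟨h₁, h₂⟩ <;> constructor <;> linarith

theorem hcount_zero_mul_rpow_le {t : ℝ} (ht0 : 0 < t) (ht1 : t < 1) (n : ℕ) (δ : ℝ) :
    (hcount p n 0 δ : ℝ) * t ^ (n * δ) ≤ (1 - t)⁻¹ ^ n := by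
  classical
  set S : (Fin n → Fin p) → ℝ := fun w => ∑ i, ((w i : ℕ) : ℝ)
  set F := Finset.univ.filter fun w => n * (0 - δ) < S w ∧ S w < n * (0 + δ)
  have hcard : hcount p n 0 δ = F.card := by
    rw [hcount, Nat.card_eq_fintype_card, Fintype.card_subtype]
  calc (hcount p n 0 δ : ℝ) * t ^ (n * δ) = ∑ _w ∈ F, t ^ (n * δ) := by
        rw [hcard, Finset.sum_const, nsmul_eq_mul]
    _ ≤ ∑ w ∈ F, t ^ S w := Finset.sum_le_sum fun w hw =>
        Real.rpow_le_rpow_of_exponent_ge ht0 ht1.le (by simpa using (Finset.mem_filter.1 hw).2.2.le)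
    _ ≤ ∑ w, t ^ S w := Finset.sum_le_sum_of_subset_of_nonneg (Finset.filter_subset _ _)
        fun _ _ _ => by positivity
    _ = (∑ d : Fin p, t ^ (d : ℕ)) ^ n := by
        simp [Fintype.sum_pow, S, Real.rpow_sum_of_pos ht0, Real.rpow_natCast]
    _ ≤ (1 - t)⁻¹ ^ n := by
        refine pow_le_pow_left₀ (by positivity) ?_ n
        rw [Fin.sum_univ_eq_sum_range (fun d => t ^ d), Finset.range_eq_Ico]
        simpa using geom_sum_Ico_le_of_lt_one ht0.le ht1 (m := 0) (n := p)

def wordRate (p : ℕ) (α δ : ℝ) (n : ℕ) : ℝ := Real.log (hcount p n α δ) / (n * Real.log p)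

-- `entropy p α` unfolds to `⨅ δ > 0, windowEntropy p α δ`
def windowEntropy (p : ℕ) (α δ : ℝ) : ℝ := limsup (wordRate p α δ) atTop

theorem wordRate_nonneg (p : ℕ) (α δ : ℝ) (n : ℕ) : 0 ≤ wordRate p α δ n :=
  div_nonneg (Real.log_natCast_nonneg _) (mul_nonneg n.cast_nonneg (Real.log_natCast_nonneg p))

theorem wordRate_le_one (p : ℕ) (α δ : ℝ) (n : ℕ) : wordRate p α δ n ≤ 1 := by
  refine div_le_of_le_mul₀ (by positivity) zero_le_one ?_
  calc Real.log (hcount p n α δ) ≤ Real.log ((p ^ n : ℕ) : ℝ) :=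
        monotone_log_natCast (hcount_le_pow p n α δ)
    _ = 1 * (n * Real.log p) := by push_cast; rw [Real.log_pow, one_mul]

theorem isBoundedUnder_le_wordRate (p : ℕ) (α δ : ℝ) {l : Filter ℕ} :
    IsBoundedUnder (· ≤ ·) l (wordRate p α δ) :=
  isBoundedUnder_of ⟨1, wordRate_le_one p α δ⟩

theorem isCoboundedUnder_le_wordRate (p : ℕ) (α δ : ℝ) {l : Filter ℕ} [l.NeBot] :
    IsCoboundedUnder (· ≤ ·) l (wordRate p α δ) :=
  (isBoundedUnder_of ⟨0, wordRate_nonneg p α δ⟩).isCoboundedUnder_le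

theorem windowEntropy_nonneg (p : ℕ) (α δ : ℝ) : 0 ≤ windowEntropy p α δ :=
  le_limsup_of_frequently_le (.of_forall (wordRate_nonneg p α δ))
    (isBoundedUnder_le_wordRate p α δ)

theorem windowEntropy_mono {α δ α' δ' : ℝ} (hlo : α' - δ' ≤ α - δ)
    (hhi : α + δ ≤ α' + δ') : windowEntropy p α δ ≤ windowEntropy p α' δ' :=
  limsup_le_limsup (.of_forall fun n => div_le_div_of_nonneg_right
      (monotone_log_natCast (hcount_mono n hlo hhi)) (by positivity))
    (isCoboundedUnder_le_wordRate p α δ) (isBoundedUnder_le_wordRate p α' δ')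

theorem entropy_le_windowEntropy (p : ℕ) (α : ℝ) {δ : ℝ} (hδ : 0 < δ) :
    entropy p α ≤ windowEntropy p α δ :=
  ciInf_le ⟨0, by rintro _ ⟨δ, rfl⟩; exact windowEntropy_nonneg p α δ⟩ (⟨δ, hδ⟩ : {δ : ℝ // 0 < δ})

theorem entropy_nonneg (p : ℕ) (α : ℝ) : 0 ≤ entropy p α :=
  have : Nonempty {δ : ℝ // 0 < δ} := ⟨⟨1, one_pos⟩⟩
  le_ciInf fun δ => windowEntropy_nonneg p α δ

theorem upperSemicontinuous_entropy (p : ℕ) : UpperSemicontinuous (entropy p) := by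
  intro α₀ y hy
  obtain ⟨⟨δ, hδ⟩, hlt⟩ := exists_lt_of_ciInf_lt hy
  filter_upwards [Ioo_mem_nhds (by linarith : α₀ - δ / 2 < α₀) (by linarith : α₀ < α₀ + δ / 2)]
    with α hα
  calc entropy p α ≤ windowEntropy p α (δ / 2) := entropy_le_windowEntropy p α (by positivity)
    _ ≤ windowEntropy p α₀ δ := windowEntropy_mono (by linarith [hα.1]) (by linarith [hα.2])
    _ < y := hlt

theorem entropy_reflect (p : ℕ) (α : ℝ) : entropy p ((p : ℝ) - 1 - α) = entropy p α := by
  simp only [entropy, hcount_reflect]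

theorem chernoff_exponent_nonneg {t δ : ℝ} (ht0 : 0 < t) (ht1 : t < 1) (hδ : 0 ≤ δ) :
    0 ≤ δ * Real.log t⁻¹ + Real.log (1 - t)⁻¹ := by
  have h₁ : 0 ≤ Real.log t⁻¹ := Real.log_nonneg ((one_le_inv₀ ht0).2 ht1.le)
  have h₂ : 0 ≤ Real.log (1 - t)⁻¹ := Real.log_nonneg ((one_le_inv₀ (by linarith)).2 (by linarith))
  positivity

theorem log_hcount_zero_le {t δ : ℝ} (ht0 : 0 < t) (ht1 : t < 1) (hδ : 0 ≤ δ) (n : ℕ) :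
    Real.log (hcount p n 0 δ) ≤ n * (δ * Real.log t⁻¹ + Real.log (1 - t)⁻¹) := by
  rcases (hcount p n 0 δ).eq_zero_or_pos with h | h
  · rw [h, Nat.cast_zero, Real.log_zero]
    exact mul_nonneg n.cast_nonneg (chernoff_exponent_nonneg ht0 ht1 hδ)
  have hlog := Real.log_le_log (by positivity) (hcount_zero_mul_rpow_le (p := p) ht0 ht1 n δ)
  rw [Real.log_mul (by positivity) (by positivity), Real.log_rpow ht0, Real.log_pow] at hlog
  simp only [Real.log_inv] at hlog ⊢
  linarith

theorem windowEntropy_zero_le (hp : 1 < p) {t δ : ℝ} (ht0 : 0 < t) (ht1 : t < 1) (hδ : 0 ≤ δ) :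
    windowEntropy p 0 δ ≤ (δ * Real.log t⁻¹ + Real.log (1 - t)⁻¹) / Real.log p := by
  have hlogp : 0 < Real.log p := Real.log_pos (by exact_mod_cast hp)
  refine limsup_le_of_le (isCoboundedUnder_le_wordRate p 0 δ) (.of_forall fun n => ?_)
  refine div_le_of_le_mul₀ (by positivity)
    (div_nonneg (chernoff_exponent_nonneg ht0 ht1 hδ) hlogp.le) ?_
  calc Real.log (hcount p n 0 δ) ≤ n * (δ * Real.log t⁻¹ + Real.log (1 - t)⁻¹) :=
        log_hcount_zero_le ht0 ht1 hδ n
    _ = _ := by field_simp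

theorem entropy_zero (hp : 1 < p) : entropy p 0 = 0 := by
  have hbound : ∀ t ∈ Ioo (0 : ℝ) 1, entropy p 0 ≤ Real.log (1 - t)⁻¹ / Real.log p := by
    intro t ht
    refine ge_of_tendsto (x := 𝓝[>] 0) ?_ (eventually_nhdsWithin_of_forall fun δ (hδ : 0 < δ) =>
      (entropy_le_windowEntropy p 0 hδ).trans (windowEntropy_zero_le hp ht.1 ht.2 hδ.le))
    have : Continuous fun δ : ℝ => (δ * Real.log t⁻¹ + Real.log (1 - t)⁻¹) / Real.log p := by
      fun_prop
    simpa using this.continuousWithinAt.tendsto (x := 0) (s := Ioi 0)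
  have hlim : Tendsto (fun t : ℝ => Real.log (1 - t)⁻¹ / Real.log p) (𝓝[>] 0) (𝓝 0) := by
    have : ContinuousAt (fun t : ℝ => Real.log (1 - t)⁻¹ / Real.log p) 0 :=
      ((continuousAt_const.sub continuousAt_id).inv₀ (by norm_num)).log (by norm_num) |>.div_const _
    simpa using this.tendsto.mono_left nhdsWithin_le_nhds
  refine le_antisymm (ge_of_tendsto hlim ?_) (entropy_nonneg p 0)
  filter_upwards [Ioo_mem_nhdsGT one_pos] with t ht using hbound t ht

theorem entropy_natCast_sub_one (hp : 1 < p) : entropy p ((p : ℝ) - 1) = 0 := by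
  simpa [entropy_zero hp] using entropy_reflect p 0

theorem eventually_hcount_le_hcount_ceil_div {α₀ β t δ : ℝ} (hβ : β ∈ Icc 0 ((p : ℝ) - 1))
    (ht0 : 0 < t) (ht1 : t < 1) (hδ : 0 < δ) :
    ∀ᶠ k : ℕ in atTop, hcount p k α₀ (δ / 2) ≤ hcount p ⌈k / t⌉₊ (t * α₀ + (1 - t) * β) δ := by
  have hlarge : ∀ᶠ k : ℕ in atTop, 2 < k * ((1 - t) / t * δ) ∧ 2 * |α₀ - β| ≤ k * δ :=
    have hc : 0 < (1 - t) / t * δ := by have := sub_pos.2 ht1; positivity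
    ((tendsto_natCast_atTop_atTop.atTop_mul_const hc).eventually_gt_atTop 2).and
      ((tendsto_natCast_atTop_atTop.atTop_mul_const hδ).eventually_ge_atTop _)
  filter_upwards [hlarge] with k ⟨hklarge, hkwin⟩
  have hkt : (k : ℝ) ≤ k / t := le_div_self k.cast_nonneg ht0 ht1.le
  obtain ⟨m, hkm⟩ := Nat.exists_eq_add_of_le (Nat.cast_le.1 (hkt.trans (Nat.le_ceil _)) :)
  have hlo : (k : ℝ) / t ≤ k + m := by exact_mod_cast hkm ▸ Nat.le_ceil ((k : ℝ) / t)
  have hhi : (k + m : ℝ) < k / t + 1 := by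
    exact_mod_cast hkm ▸ Nat.ceil_lt_add_one (by positivity : (0 : ℝ) ≤ k / t)
  rw [hkm]
  have hmt : (k : ℝ) * ((1 - t) / t) ≤ m := by
    have : (k : ℝ) * ((1 - t) / t) = k / t - k := by field_simp
    linarith
  have hm : 1 < (m : ℝ) * (δ / 2) := by
    nlinarith [mul_le_mul_of_nonneg_right hmt hδ.le]
  -- `(k + m) α - (k α₀ + m β) = (t (k + m) - k) (α₀ - β)` and `0 ≤ t (k + m) - k < t`
  have hdefect : |t * (k + m) - k| ≤ 1 := by
    have h₁ : (k : ℝ) ≤ t * (k + m) := by rw [div_le_iff₀ ht0] at hlo; linarith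
    have h₂ : t * (k + m) < k + t := by
      calc t * (k + m) < t * (k / t + 1) := mul_lt_mul_of_pos_left hhi ht0
        _ = k + t := by field_simp
    exact abs_le.2 ⟨by linarith, by linarith⟩
  have hwindow : |((k + m : ℕ) : ℝ) * (t * α₀ + (1 - t) * β) - (k * α₀ + m * β)|
      ≤ ((k + m : ℕ) : ℝ) * δ - (k * (δ / 2) + m * (δ / 2)) := by
    have : ((k + m : ℕ) : ℝ) * (t * α₀ + (1 - t) * β) - (k * α₀ + m * β)
        = (t * (k + m) - k) * (α₀ - β) := by push_cast; ring
    rw [this, abs_mul]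
    push_cast
    nlinarith [mul_le_mul_of_nonneg_right hdefect (abs_nonneg (α₀ - β))]
  calc hcount p k α₀ (δ / 2) = hcount p k α₀ (δ / 2) * 1 := (mul_one _).symm
    _ ≤ hcount p k α₀ (δ / 2) * hcount p m β (δ / 2) := Nat.mul_le_mul_left _ (one_le_hcount hβ hm)
    _ ≤ hcount p (k + m) (t * α₀ + (1 - t) * β) δ := hcount_mul_hcount_le k m hwindow

theorem tendsto_div_ceil_div {t : ℝ} (ht0 : 0 < t) :
    Tendsto (fun k : ℕ => (k : ℝ) / ⌈k / t⌉₊) atTop (𝓝 t) := by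
  have hx : Tendsto (fun k : ℕ => (k : ℝ) / t) atTop atTop :=
    tendsto_natCast_atTop_atTop.atTop_div_const ht0
  have := (tendsto_const_nhds (x := t)).div (tendsto_nat_ceil_div_atTop.comp hx) one_ne_zero
  refine (div_one t ▸ this).congr fun k => ?_
  simp only [Pi.div_apply, Function.comp_apply, div_div_eq_mul_div]
  field_simp

theorem mul_windowEntropy_le_windowEntropy_convex_comb {α₀ β t δ : ℝ} (hβ : β ∈ Icc 0 ((p : ℝ) - 1))
    (ht0 : 0 < t) (ht1 : t < 1) (hδ : 0 < δ) :
    t * windowEntropy p α₀ (δ / 2) ≤ windowEntropy p (t * α₀ + (1 - t) * β) δ := by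
  set α := t * α₀ + (1 - t) * β
  set n : ℕ → ℕ := fun k => ⌈k / t⌉₊
  set r : ℕ → ℝ := fun k => k / n k
  have hn : Tendsto n atTop atTop :=
    tendsto_nat_ceil_atTop.comp (tendsto_natCast_atTop_atTop.atTop_div_const ht0)
  have hr_le : ∀ k, r k ≤ 1 := fun k =>
    div_le_one_of_le₀ ((le_div_self k.cast_nonneg ht0 ht1.le).trans (Nat.le_ceil _))
      (Nat.cast_nonneg _)
  have hev : ∀ᶠ k in atTop, (wordRate p α₀ (δ / 2) * r) k ≤ (wordRate p α δ ∘ n) k := by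
    filter_upwards [eventually_hcount_le_hcount_ceil_div hβ ht0 ht1 hδ, eventually_gt_atTop 0]
      with k hk hk0
    calc wordRate p α₀ (δ / 2) k * r k
        = Real.log (hcount p k α₀ (δ / 2)) / (n k * Real.log p) := by
          simp only [wordRate, r]
          field_simp
      _ ≤ wordRate p α δ (n k) :=
          div_le_div_of_nonneg_right (monotone_log_natCast hk) (by positivity)
  calc t * windowEntropy p α₀ (δ / 2) = windowEntropy p α₀ (δ / 2) * liminf r atTop := by
        rw [(tendsto_div_ceil_div ht0).liminf_eq, mul_comm]
    _ ≤ limsup (wordRate p α₀ (δ / 2) * r) atTop :=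
        le_limsup_mul (.of_forall (wordRate_nonneg p α₀ (δ / 2)))
          (isBoundedUnder_le_wordRate p α₀ (δ / 2)) (.of_forall fun k => by positivity)
          (isBoundedUnder_of ⟨1, hr_le⟩)
    _ ≤ limsup (wordRate p α δ ∘ n) atTop :=
        limsup_le_limsup hev
          (isBoundedUnder_of ⟨0, fun k => mul_nonneg (wordRate_nonneg p α₀ (δ / 2) k)
            (by positivity)⟩).isCoboundedUnder_le
          (isBoundedUnder_of ⟨1, fun k => wordRate_le_one p α δ (n k)⟩)
    _ ≤ windowEntropy p α δ := hn.limsup_comp_le_limsup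
        (isCoboundedUnder_le_wordRate p α δ) (isBoundedUnder_le_wordRate p α δ)

theorem mul_entropy_le_entropy_convex_comb {α₀ β t : ℝ} (hβ : β ∈ Icc 0 ((p : ℝ) - 1))
    (ht : t ∈ Icc (0 : ℝ) 1) :
    t * entropy p α₀ ≤ entropy p (t * α₀ + (1 - t) * β) := by
  rcases eq_endpoints_or_mem_Ioo_of_mem_Icc ht with rfl | rfl | ⟨ht0, ht1⟩
  · simpa using entropy_nonneg p β
  · simp
  have : Nonempty {δ : ℝ // 0 < δ} := ⟨⟨1, one_pos⟩⟩
  refine le_ciInf fun ⟨δ, hδ⟩ => ?_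
  calc t * entropy p α₀ ≤ t * windowEntropy p α₀ (δ / 2) :=
        mul_le_mul_of_nonneg_left (entropy_le_windowEntropy p α₀ (by positivity)) ht0.le
    _ ≤ windowEntropy p (t * α₀ + (1 - t) * β) δ :=
        mul_windowEntropy_le_windowEntropy_convex_comb hβ ht0 ht1 hδ

end

/-- For an integer `p ≥ 2`, the `p`-adic entropy function is continuous
on `[0, p-1]`. -/
theorem entropy_continuousOn (p : ℕ) (hp : 2 ≤ p) :
    ContinuousOn (entropy p) (Icc (0 : ℝ) ((p : ℝ) - 1)) :=
  continuousOn_Icc_of_upperSemicontinuousOn_of_mul_le_convex_comb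
    ((upperSemicontinuous_entropy p).upperSemicontinuousOn _) (entropy_zero hp)
    (entropy_natCast_sub_one hp) fun _ _ _ hy _ ht => mul_entropy_le_entropy_convex_comb hy ht
end
end

section
/- Fix an integer p ≥ 2 and 0 ≤ α ≤ p−1, and let B*(α) = {x ∈ [0,1] : M(x) exists and equals α}, where M(x) = lim_{n→∞} lim_{m→∞} S_n(T^m x)/n is the moving digit mean. If α ∈ {0,1,…,p−1}, then B*(α) is a countable set (it consists exactly of the x whose digit sequence is eventually the constant digit α); otherwise B*(α) is empty. Hence dim_H B*(α) = 0 for every 0 ≤ α ≤ p−1. -/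
open Filter MeasureTheory Set
open scoped ENNReal

noncomputable section

/-- `B*(α) = {x ∈ [0,1] : M(x) exists and equals α}`, where
`M(x) = lim_{n→∞} lim_{m→∞} S_n(T^m x)/n` is the moving digit mean, defined whenever
the inner limits in `m` exist for all large `n` and the outer limit exists. -/
def BstarSet (p : ℕ) (α : ℝ) : Set ℝ :=
  {x | x ∈ Icc (0 : ℝ) 1 ∧ ∃ L : ℕ → ℝ,
    (∀ᶠ n in atTop, Tendsto (fun m : ℕ => (msum p x m n : ℝ) / n) atTop (nhds (L n))) ∧
    Tendsto L atTop (nhds α)}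

lemma padicDigit_nonneg {p : ℕ} (hp : 2 ≤ p) (x : ℝ) (n : ℕ) :
    0 ≤ padicDigit p x n := by
  have hp0 : (0 : ℝ) < p := by positivity
  have h1 : ((⌈x * p ^ n⌉ : ℝ) - 1) < x * p ^ n := by
    linarith [Int.ceil_lt_add_one (x * p ^ n)]
  have h2 : (p : ℝ) * ((⌈x * p ^ n⌉ : ℝ) - 1) < x * p ^ (n + 1) := by
    have := mul_lt_mul_of_pos_left h1 hp0
    calc (p : ℝ) * ((⌈x * p ^ n⌉ : ℝ) - 1) < p * (x * p ^ n) := this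
      _ = x * p ^ (n + 1) := by ring
  have h3 : (p : ℝ) * ((⌈x * p ^ n⌉ : ℝ) - 1) < (⌈x * p ^ (n + 1)⌉ : ℝ) :=
    lt_of_lt_of_le h2 (Int.le_ceil _)
  have h4 : (p : ℤ) * (⌈x * p ^ n⌉ - 1) < ⌈x * p ^ (n + 1)⌉ := by exact_mod_cast h3
  unfold padicDigit
  omega

lemma padicDigit_le {p : ℕ} (hp : 2 ≤ p) (x : ℝ) (n : ℕ) :
    padicDigit p x n ≤ (p : ℤ) - 1 := by
  have hp0 : (0 : ℝ) ≤ p := by positivity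
  have h1 : x * p ^ (n + 1) ≤ (p : ℝ) * (⌈x * p ^ n⌉ : ℝ) := by
    have := mul_le_mul_of_nonneg_left (Int.le_ceil (x * p ^ n)) hp0
    calc x * p ^ (n + 1) = p * (x * p ^ n) := by ring
      _ ≤ (p : ℝ) * (⌈x * p ^ n⌉ : ℝ) := this
  have h2 : (⌈x * p ^ (n + 1)⌉ : ℤ) ≤ (p : ℤ) * ⌈x * p ^ n⌉ := by
    apply Int.ceil_le.mpr
    exact_mod_cast h1
  unfold padicDigit
  linarith

/-- The ceiling together with the digit sequence determines `x`. -/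
lemma eq_of_ceil_digits {p : ℕ} (hp : 2 ≤ p) {x y : ℝ}
    (h0 : ⌈x⌉ = ⌈y⌉) (h : ∀ n, padicDigit p x n = padicDigit p y n) : x = y := by
  have hp1 : (1 : ℝ) < p := by exact_mod_cast hp.trans_lt' one_lt_two
  have hceil : ∀ n, ⌈x * p ^ n⌉ = ⌈y * p ^ n⌉ := by
    intro n
    induction n with
    | zero => simpa using h0
    | succ n ih =>
      have hx := h n
      unfold padicDigit at hx
      rw [ih] at hx
      linarith
  have hdist : ∀ n : ℕ, |x - y| * (p : ℝ) ^ n < 1 := by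
    intro n
    have hx1 : (⌈x * p ^ n⌉ : ℝ) - 1 < x * p ^ n := by
      linarith [Int.ceil_lt_add_one (x * p ^ n)]
    have hx2 : x * p ^ n ≤ (⌈x * p ^ n⌉ : ℝ) := Int.le_ceil _
    have hy1 : (⌈x * p ^ n⌉ : ℝ) - 1 < y * p ^ n := by
      rw [hceil n]; linarith [Int.ceil_lt_add_one (y * p ^ n)]
    have hy2 : y * p ^ n ≤ (⌈x * p ^ n⌉ : ℝ) := by rw [hceil n]; exact Int.le_ceil _
    have : |x * p ^ n - y * p ^ n| < 1 := by
      rw [abs_sub_lt_iff]; constructor <;> linarith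
    calc |x - y| * (p : ℝ) ^ n = |x - y| * |(p : ℝ) ^ n| := by
          rw [abs_of_nonneg (by positivity : (0:ℝ) ≤ (p : ℝ) ^ n)]
      _ = |x * p ^ n - y * p ^ n| := by rw [← abs_mul]; ring_nf
      _ < 1 := this
  by_contra hne
  have habs : 0 < |x - y| := abs_pos.mpr (sub_ne_zero.mpr hne)
  obtain ⟨n, hn⟩ := pow_unbounded_of_one_lt (1 / |x - y|) hp1
  have := hdist n
  rw [div_lt_iff₀ habs] at hn
  nlinarith

/-- An integer-valued sequence converging in `ℝ` is eventually constant. -/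
lemma int_seq_eventually_const {f : ℕ → ℤ} {c : ℝ}
    (h : Tendsto (fun m => (f m : ℝ)) atTop (nhds c)) :
    ∃ m0 : ℕ, ∀ m, m0 ≤ m → f m = f m0 := by
  obtain ⟨m0, hm0⟩ := Metric.tendsto_atTop.mp h (1/2) (by norm_num)
  refine ⟨m0, fun m hm => ?_⟩
  have h1 := hm0 m hm
  have h2 := hm0 m0 le_rfl
  rw [Real.dist_eq] at h1 h2
  have h3 : |(f m : ℝ) - (f m0 : ℝ)| < 1 := by
    have e1 := abs_sub_lt_iff.mp h1
    have e2 := abs_sub_lt_iff.mp h2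
    rw [abs_sub_lt_iff]
    constructor <;> linarith [e1.1, e1.2, e2.1, e2.2]
  have h4 : ((|f m - f m0| : ℤ) : ℝ) < 1 := by push_cast; exact h3
  have h5 : |f m - f m0| < 1 := by exact_mod_cast h4
  rw [abs_lt] at h5
  omega

/-- If the digits are eventually constant, the moving sums are eventually constant. -/
lemma msum_const {p : ℕ} {x : ℝ} {M : ℕ} {d : ℤ}
    (h : ∀ k, M ≤ k → padicDigit p x k = d) :
    ∀ n m, M ≤ m → msum p x m n = n * d := by
  intro n
  induction n with
  | zero => intro m _; simp [msum]
  | succ n ih =>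
    intro m hm
    have h1 := ih m hm
    unfold msum at h1 ⊢
    rw [Finset.sum_range_succ, h1, h (m + n) (by omega)]
    push_cast
    ring

/-- Forward direction: members of `B*(α)` have eventually constant digits. -/
lemma bstar_digits {p : ℕ} (hp : 2 ≤ p) {α : ℝ} {x : ℝ} (hx : x ∈ BstarSet p α) :
    ∃ d : ℕ, d < p ∧ α = d ∧ ∀ᶠ n in atTop, padicDigit p x n = (d : ℤ) := by
  obtain ⟨hx01, L, hL, hLα⟩ := hx
  obtain ⟨N0, hN0⟩ := eventually_atTop.mp hL
  set N := max N0 1 with hN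
  have hN1 : 1 ≤ N := le_max_right _ _
  have hNtend : ∀ n, N ≤ n →
      Tendsto (fun m : ℕ => (msum p x m n : ℝ)) atTop (nhds ((n : ℝ) * L n)) := by
    intro n hn
    have hn1 : 1 ≤ n := hN1.trans hn
    have hn0 : (n : ℝ) ≠ 0 := by positivity
    have h1 : Tendsto (fun m : ℕ => (msum p x m n : ℝ) / n * n) atTop
        (nhds (L n * n)) :=
      (hN0 n (le_trans (le_max_left _ _) hn)).mul_const _
    have h2 : (fun m : ℕ => (msum p x m n : ℝ) / n * n) =
        fun m : ℕ => (msum p x m n : ℝ) := by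
      funext m; field_simp
    rw [h2, mul_comm] at h1
    exact h1
  obtain ⟨M1, hM1⟩ := int_seq_eventually_const (f := fun m => msum p x m N)
    (hNtend N le_rfl)
  obtain ⟨M2, hM2⟩ := int_seq_eventually_const (f := fun m => msum p x m (N + 1))
    (hNtend (N + 1) (by omega))
  set M := max M1 M2 with hM
  set dZ := msum p x M (N + 1) - msum p x M N with hdZ
  have hdig : ∀ k, M + N ≤ k → padicDigit p x k = dZ := by
    intro k hk
    set m := k - N with hm
    have hmk : m + N = k := by omega
    have hmM : M ≤ m := by omega
    have e1 : msum p x m N = msum p x M N := by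
      rw [hM1 m (le_trans (le_max_left _ _) hmM), hM1 M (le_max_left _ _)]
    have e2 : msum p x m (N + 1) = msum p x M (N + 1) := by
      rw [hM2 m (le_trans (le_max_right _ _) hmM), hM2 M (le_max_right _ _)]
    have e3 : msum p x m (N + 1) = msum p x m N + padicDigit p x (m + N) := by
      unfold msum; rw [Finset.sum_range_succ]
    rw [← hmk]
    omega
  have hd0 : 0 ≤ dZ := by
    rw [← hdig (M + N) le_rfl]; exact padicDigit_nonneg hp x _
  have hd1 : dZ ≤ (p : ℤ) - 1 := by
    rw [← hdig (M + N) le_rfl]; exact padicDigit_le hp x _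
  refine ⟨dZ.toNat, by omega, ?_, ?_⟩
  · -- α = dZ
    have hLeq : ∀ n, N ≤ n → L n = (dZ : ℝ) := by
      intro n hn
      have hn1 : 1 ≤ n := hN1.trans hn
      have hn0 : (n : ℝ) ≠ 0 := by positivity
      have hconst := msum_const (p := p) (x := x) hdig n
      have he : (fun m : ℕ => (msum p x m n : ℝ) / n) =ᶠ[atTop]
          fun _ : ℕ => (dZ : ℝ) := by
        filter_upwards [eventually_ge_atTop (M + N)] with m hm
        rw [hconst m hm]
        push_cast
        field_simp
      have ht : Tendsto (fun m : ℕ => (msum p x m n : ℝ) / n) atTop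
          (nhds (dZ : ℝ)) := Tendsto.congr' he.symm tendsto_const_nhds
      exact tendsto_nhds_unique (hN0 n (le_trans (le_max_left _ _) hn)) ht
    have hLd : Tendsto L atTop (nhds (dZ : ℝ)) := by
      apply Tendsto.congr' _ (tendsto_const_nhds (α := ℕ) (x := (dZ : ℝ)))
      filter_upwards [eventually_ge_atTop N] with n hn
      exact (hLeq n hn).symm
    have := tendsto_nhds_unique hLα hLd
    rw [this]
    norm_cast
    omega
  · filter_upwards [eventually_ge_atTop (M + N)] with k hk
    rw [hdig k hk]
    omega

/-- Converse: eventually constant digits give membership in `B*(i)`. -/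
lemma digits_bstar {p : ℕ} (hp : 2 ≤ p) {x : ℝ} (hx : x ∈ Icc (0:ℝ) 1) {i : ℕ}
    (h : ∀ᶠ n in atTop, padicDigit p x n = (i : ℤ)) : x ∈ BstarSet p (i : ℝ) := by
  obtain ⟨M, hM⟩ := eventually_atTop.mp h
  refine ⟨hx, fun _ => (i : ℝ), ?_, tendsto_const_nhds⟩
  filter_upwards [eventually_ge_atTop 1] with n hn
  have hn0 : (n : ℝ) ≠ 0 := by positivity
  have hconst := msum_const (p := p) (x := x) hM n
  have he : (fun m : ℕ => (msum p x m n : ℝ) / n) =ᶠ[atTop]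
      fun _ : ℕ => (i : ℝ) := by
    filter_upwards [eventually_ge_atTop M] with m hm
    rw [hconst m hm]
    push_cast
    field_simp
  exact Tendsto.congr' he.symm tendsto_const_nhds

/-- The set of `x ∈ [0,1]` with eventually constant digit `i` is countable. -/
lemma countable_eventuallyConst {p : ℕ} (hp : 2 ≤ p) (i : ℕ) :
    {x : ℝ | x ∈ Icc (0:ℝ) 1 ∧ ∀ᶠ n in atTop, padicDigit p x n = (i : ℤ)}.Countable := by
  have hsub : {x : ℝ | x ∈ Icc (0:ℝ) 1 ∧ ∀ᶠ n in atTop, padicDigit p x n = (i : ℤ)} ⊆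
      ⋃ N : ℕ, {x : ℝ | ∀ n, N ≤ n → padicDigit p x n = (i : ℤ)} := by
    rintro x ⟨_, hx⟩
    obtain ⟨N, hN⟩ := eventually_atTop.mp hx
    exact mem_iUnion.mpr ⟨N, hN⟩
  refine Set.Countable.mono hsub (Set.countable_iUnion fun N => ?_)
  have : Set.MapsTo (fun x : ℝ => (⌈x⌉, fun k : Fin N => padicDigit p x k))
      {x : ℝ | ∀ n, N ≤ n → padicDigit p x n = (i : ℤ)}
      (Set.univ : Set (ℤ × (Fin N → ℤ))) := Set.mapsTo_univ _ _
  refine this.countable_of_injOn ?_ Set.countable_univ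
  intro x hx y hy hxy
  simp only [Prod.mk.injEq] at hxy
  refine eq_of_ceil_digits hp hxy.1 fun n => ?_
  by_cases hn : n < N
  · exact congrFun hxy.2 ⟨n, hn⟩
  · rw [hx n (by omega), hy n (by omega)]

/-- For an integer `p ≥ 2` and `0 ≤ α ≤ p-1`: if `α` is one of the
digits `0,1,…,p-1`, then `B*(α)` is countable and consists exactly of the `x ∈ [0,1]`
whose digit sequence is eventually the constant digit `α`; otherwise `B*(α)` is empty.
Hence `dim_H B*(α) = 0`. -/
theorem BstarSet_trivial (p : ℕ) (hp : 2 ≤ p) (α : ℝ)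
    (hα : 0 ≤ α) (hα' : α ≤ (p : ℝ) - 1) :
    (∀ i : ℕ, i < p → α = i →
      (BstarSet p α).Countable ∧
      BstarSet p α =
        {x | x ∈ Icc (0 : ℝ) 1 ∧ ∀ᶠ n in atTop, padicDigit p x n = (i : ℤ)}) ∧
    ((¬ ∃ i : ℕ, i < p ∧ α = i) → BstarSet p α = ∅) ∧
    dimH (BstarSet p α) = 0 := by
  have key : ∀ x ∈ BstarSet p α,
      ∃ d : ℕ, d < p ∧ α = d ∧ ∀ᶠ n in atTop, padicDigit p x n = (d : ℤ) :=
    fun x hx => bstar_digits hp hx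
  have hcount : ∀ i : ℕ, i < p → α = i →
      (BstarSet p α).Countable ∧
      BstarSet p α =
        {x | x ∈ Icc (0 : ℝ) 1 ∧ ∀ᶠ n in atTop, padicDigit p x n = (i : ℤ)} := by
    intro i hi hαi
    have hset : BstarSet p α =
        {x | x ∈ Icc (0 : ℝ) 1 ∧ ∀ᶠ n in atTop, padicDigit p x n = (i : ℤ)} := by
      ext x
      constructor
      · intro hx
        obtain ⟨d, hd, hαd, hdig⟩ := key x hx
        have hdi : d = i := by
          have : (d : ℝ) = (i : ℝ) := by rw [← hαd, hαi]
          exact_mod_cast this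
        exact ⟨hx.1, hdi ▸ hdig⟩
      · rintro ⟨h1, h2⟩
        have := digits_bstar hp h1 h2
        rwa [← hαi] at this
    exact ⟨hset ▸ countable_eventuallyConst hp i, hset⟩
  have hempty : (¬ ∃ i : ℕ, i < p ∧ α = i) → BstarSet p α = ∅ := by
    intro hne
    ext x
    simp only [Set.mem_empty_iff_false, iff_false]
    intro hx
    obtain ⟨d, hd, hαd, _⟩ := key x hx
    exact hne ⟨d, hd, hαd⟩
  refine ⟨hcount, hempty, ?_⟩
  have : (BstarSet p α).Countable := by
    by_cases hc : ∃ i : ℕ, i < p ∧ α = i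
    · obtain ⟨i, hi, hαi⟩ := hc
      exact (hcount i hi hαi).1
    · rw [hempty hc]; exact Set.countable_empty
  exact this.dimH_zero
end
end
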